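/- Growth of the momentum support is controlled by the field: let T > 0, let E : [0,T]×ℝ → ℝ be continuous, bounded, and Lipschitz in x uniformly in t, and let f : [0,T]×ℝ×ℝ → ℝ be continuously differentiable, with compact support in (x,v) for each fixed t, satisfying pointwise ∂ₜf(t,x,v) + v̂ ∂ₓf(t,x,v) + E(t,x) ∂ᵥf(t,x,v) = 0. Then for every t ∈ [0,T]: P(t) ≤ P(0) + ∫₀ᵗ sup_{x ∈ ℝ} |E(τ,x)| dτ. -/

import Mathlib

open MeasureTheory Set intervalIntegral

/-- The relativistic velocity `v̂ = v / √(1+v²)`. -/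
noncomputable def vhat (v : ℝ) : ℝ := v / Real.sqrt (1 + v ^ 2)

/-- The momentum support `P(t) = sup {|v| : ∃ x, f(t,x,v) ≠ 0}` of a distribution function. -/
noncomputable def momentumSupport (f : ℝ → ℝ → ℝ → ℝ) (t : ℝ) : ℝ :=
  sSup {r : ℝ | ∃ x v : ℝ, r = |v| ∧ f t x v ≠ 0}

lemma sqrt_pos' (v : ℝ) : 0 < Real.sqrt (1 + v ^ 2) :=
  Real.sqrt_pos.2 (by positivity)

lemma sqrt_ge_one (v : ℝ) : 1 ≤ Real.sqrt (1 + v ^ 2) := by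
  nlinarith [Real.sq_sqrt (show (0:ℝ) ≤ 1 + v^2 by positivity), sqrt_pos' v, sq_nonneg v]

lemma hasDerivAt_vhat (v : ℝ) :
    HasDerivAt vhat (1 / Real.sqrt (1 + v ^ 2) ^ 3) v := by
  have h0 : (0:ℝ) < 1 + v ^ 2 := by positivity
  have hs := sqrt_pos' v
  have h1 : HasDerivAt (fun w : ℝ => 1 + w ^ 2) (2 * v) v := by
    simpa using ((hasDerivAt_pow 2 v).const_add 1)
  have h2 : HasDerivAt (fun w : ℝ => Real.sqrt (1 + w ^ 2))
      (1 / (2 * Real.sqrt (1 + v ^ 2)) * (2 * v)) v :=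
    (Real.hasDerivAt_sqrt h0.ne').comp v h1
  have h3 := (hasDerivAt_id v).div h2 hs.ne'
  convert h3 using 1
  · rfl
  · rfl
  · rfl
  have hsq : Real.sqrt (1 + v ^ 2) ^ 2 = 1 + v ^ 2 := Real.sq_sqrt h0.le
  have hnum : 1 * Real.sqrt (1 + v ^ 2) - id v * (1 / (2 * Real.sqrt (1 + v ^ 2)) * (2 * v))
      = 1 / Real.sqrt (1 + v ^ 2) := by
    field_simp
    simp only [id]
    nlinarith [hsq]
  rw [hnum]
  rw [div_div]
  congr 1
  rw [pow_succ, pow_two]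
  ring

lemma abs_vhat_le (v : ℝ) : |vhat v| ≤ 1 := by
  have hs := sqrt_pos' v
  rw [vhat, abs_div, abs_of_pos hs, div_le_one hs]
  have : |v| = Real.sqrt (v ^ 2) := (Real.sqrt_sq_eq_abs v).symm
  rw [this]
  exact Real.sqrt_le_sqrt (by linarith)

lemma lipschitzWith_vhat : LipschitzWith 1 vhat := by
  apply lipschitzWith_of_nnnorm_deriv_le (fun v => (hasDerivAt_vhat v).differentiableAt)
  intro v
  rw [(hasDerivAt_vhat v).deriv]
  have h1 : (1:ℝ) ≤ Real.sqrt (1 + v ^ 2) ^ 3 := one_le_pow₀ (sqrt_ge_one v)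
  rw [← NNReal.coe_le_coe]
  simp only [coe_nnnorm, Real.norm_eq_abs, NNReal.coe_one]
  rw [abs_of_nonneg (by positivity), div_le_one (by positivity)]
  exact h1

lemma fderiv_triple_apply (f : ℝ → ℝ → ℝ → ℝ)
    (hf : ContDiff ℝ 1 (fun p : ℝ × ℝ × ℝ => f p.1 p.2.1 p.2.2)) (t x v a b c : ℝ) :
    fderiv ℝ (fun p : ℝ × ℝ × ℝ => f p.1 p.2.1 p.2.2) (t, x, v) (a, b, c) =
      a * deriv (fun s => f s x v) t + b * deriv (fun y => f t y v) x
        + c * deriv (fun w => f t x w) v := by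
  set F : ℝ × ℝ × ℝ → ℝ := fun p => f p.1 p.2.1 p.2.2 with hF
  set p : ℝ × ℝ × ℝ := (t, x, v) with hp
  have hdF : HasFDerivAt F (fderiv ℝ F p) p :=
    ((hf.differentiable one_ne_zero) p).hasFDerivAt
  have h1 : HasDerivAt (fun s => f s x v) (fderiv ℝ F p (1, 0, 0)) t := by
    have hc : HasDerivAt (fun s : ℝ => ((s, x, v) : ℝ × ℝ × ℝ)) ((1, 0, 0) : ℝ × ℝ × ℝ) t :=
      (hasDerivAt_id t).prodMk (hasDerivAt_const t (x, v))
    exact hdF.comp_hasDerivAt t hc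
  have h2 : HasDerivAt (fun y => f t y v) (fderiv ℝ F p (0, 1, 0)) x := by
    have hc : HasDerivAt (fun y : ℝ => ((t, y, v) : ℝ × ℝ × ℝ)) ((0, 1, 0) : ℝ × ℝ × ℝ) x :=
      (hasDerivAt_const x t).prodMk ((hasDerivAt_id x).prodMk (hasDerivAt_const x v))
    exact hdF.comp_hasDerivAt x hc
  have h3 : HasDerivAt (fun w => f t x w) (fderiv ℝ F p (0, 0, 1)) v := by
    have hc : HasDerivAt (fun w : ℝ => ((t, x, w) : ℝ × ℝ × ℝ)) ((0, 0, 1) : ℝ × ℝ × ℝ) v :=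
      (hasDerivAt_const v t).prodMk ((hasDerivAt_const v x).prodMk (hasDerivAt_id v))
    exact hdF.comp_hasDerivAt v hc
  rw [h1.deriv, h2.deriv, h3.deriv]
  have hdecomp : ((a, b, c) : ℝ × ℝ × ℝ)
      = a • ((1, 0, 0) : ℝ × ℝ × ℝ) + b • ((0, 1, 0) : ℝ × ℝ × ℝ)
        + c • ((0, 0, 1) : ℝ × ℝ × ℝ) := by
    simp [Prod.ext_iff]
  rw [hdecomp]
  simp only [map_add, ContinuousLinearMap.map_smul, smul_eq_mul]

/-- **Growth of the momentum support is controlled by the field.**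
If `E` is continuous, bounded and Lipschitz in `x` uniformly in `t` on `[0,T]×ℝ`, and `f`
is a `C¹` solution of `∂ₜf + v̂ ∂ₓf + E ∂ᵥf = 0` with compact `(x,v)`-support for each `t`,
then for every `t ∈ [0,T]`: `P(t) ≤ P(0) + ∫₀ᵗ sup_x |E(τ,x)| dτ`. -/
theorem momentum_support_growth (T : ℝ) (hT : 0 < T)
    (E : ℝ → ℝ → ℝ)
    (hEc : ContinuousOn (fun p : ℝ × ℝ => E p.1 p.2) (Icc (0:ℝ) T ×ˢ univ))
    (hEb : ∃ M : ℝ, ∀ t ∈ Icc (0:ℝ) T, ∀ x : ℝ, |E t x| ≤ M)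
    (hEl : ∃ L : ℝ, ∀ t ∈ Icc (0:ℝ) T, ∀ x y : ℝ, |E t x - E t y| ≤ L * |x - y|)
    (f : ℝ → ℝ → ℝ → ℝ)
    (hf : ContDiff ℝ 1 (fun p : ℝ × ℝ × ℝ => f p.1 p.2.1 p.2.2))
    (hsupp : ∀ t ∈ Icc (0:ℝ) T, HasCompactSupport (fun p : ℝ × ℝ => f t p.1 p.2))
    (hpde : ∀ t ∈ Icc (0:ℝ) T, ∀ x v : ℝ,
      deriv (fun s => f s x v) t + vhat v * deriv (fun y => f t y v) x
        + E t x * deriv (fun w => f t x w) v = 0) :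
    ∀ t ∈ Icc (0:ℝ) T,
      momentumSupport f t ≤ momentumSupport f 0 + ∫ τ in (0:ℝ)..t, ⨆ x : ℝ, |E τ x| := by
  obtain ⟨M, hM⟩ := hEb
  obtain ⟨L, hL⟩ := hEl
  have h0T : (0:ℝ) ∈ Icc (0:ℝ) T := ⟨le_refl 0, hT.le⟩
  have hM0 : 0 ≤ M := (abs_nonneg _).trans (hM 0 h0T 0)
  set L' : ℝ := max L 0 with hL'def
  have hL'0 : 0 ≤ L' := le_max_right L 0
  have hL' : ∀ s ∈ Icc (0:ℝ) T, ∀ x y : ℝ, |E s x - E s y| ≤ L' * |x - y| := fun s hs x y =>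
    (hL s hs x y).trans (mul_le_mul_of_nonneg_right (le_max_left L 0) (abs_nonneg _))
  set S : ℝ → ℝ := fun τ => ⨆ x : ℝ, |E τ x| with hSdef
  have hSbdd : ∀ τ ∈ Icc (0:ℝ) T, BddAbove (range fun x : ℝ => |E τ x|) := fun τ hτ =>
    ⟨M, by rintro r ⟨x, rfl⟩; exact hM τ hτ x⟩
  have hSnonneg : ∀ τ ∈ Icc (0:ℝ) T, 0 ≤ S τ := fun τ hτ =>
    (abs_nonneg (E τ 0)).trans (le_ciSup (hSbdd τ hτ) 0)
  have hSleM : ∀ τ ∈ Icc (0:ℝ) T, S τ ≤ M := fun τ hτ => ciSup_le (hM τ hτ)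
  -- continuity of slices of E
  have hslicet : ∀ q : ℝ, ContinuousOn (fun τ => E τ q) (Icc (0:ℝ) T) := by
    intro q
    have h1 : Continuous (fun τ : ℝ => (τ, q)) := continuous_id.prodMk continuous_const
    exact hEc.comp h1.continuousOn (fun τ hτ => ⟨hτ, mem_univ _⟩)
  have hslicex : ∀ τ ∈ Icc (0:ℝ) T, Continuous (fun y => E τ y) := by
    intro τ hτ
    have h1 : Continuous (fun y : ℝ => ((τ, y) : ℝ × ℝ)) := continuous_const.prodMk continuous_id
    exact hEc.comp_continuous h1 (fun y => ⟨hτ, mem_univ _⟩)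
  have hSrat : ∀ τ ∈ Icc (0:ℝ) T, S τ = ⨆ q : ℚ, |E τ (q:ℝ)| := by
    intro τ hτ
    have hbddq : BddAbove (range fun q : ℚ => |E τ (q:ℝ)|) :=
      ⟨M, by rintro r ⟨q, rfl⟩; exact hM τ hτ q⟩
    apply le_antisymm
    · apply ciSup_le
      intro x
      have hcont : Continuous (fun y : ℝ => |E τ y|) := (hslicex τ hτ).abs
      have hclosed : IsClosed {y : ℝ | |E τ y| ≤ ⨆ q : ℚ, |E τ (q:ℝ)|} :=
        isClosed_le hcont continuous_const
      have hsub : range ((↑) : ℚ → ℝ) ⊆ {y : ℝ | |E τ y| ≤ ⨆ q : ℚ, |E τ (q:ℝ)|} := by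
        rintro y ⟨q, rfl⟩
        exact le_ciSup hbddq q
      have hx : x ∈ closure (range ((↑) : ℚ → ℝ)) := by
        rw [Rat.denseRange_cast.closure_range]; trivial
      have := (closure_mono hsub).trans_eq hclosed.closure_eq
      exact this hx
    · exact ciSup_le fun q => le_ciSup (hSbdd τ hτ) (q:ℝ)
  intro t ht
  obtain ⟨ht0, htT⟩ := ht
  have hsub0T : Icc (0:ℝ) t ⊆ Icc (0:ℝ) T := Icc_subset_Icc le_rfl htT
  have hsubIoc : Ioc (0:ℝ) t ⊆ Icc (0:ℝ) T := fun s hs => ⟨hs.1.le, hs.2.trans htT⟩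
  -- integrability of S on [0, t]
  have hSint : IntervalIntegrable S volume 0 t := by
    rw [intervalIntegrable_iff_integrableOn_Ioc_of_le ht0]
    have hmono : volume.restrict (Ioc (0:ℝ) t) ≤ volume.restrict (Icc (0:ℝ) T) :=
      Measure.restrict_mono hsubIoc le_rfl
    have hq : ∀ q : ℚ, AEMeasurable (fun τ => |E τ (q:ℝ)|) (volume.restrict (Ioc (0:ℝ) t)) := by
      intro q
      exact (((hslicet (q:ℝ)).abs).aemeasurable measurableSet_Icc).mono_measure hmono
    have hS' : AEMeasurable (fun τ => ⨆ q : ℚ, |E τ (q:ℝ)|) (volume.restrict (Ioc (0:ℝ) t)) :=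
      AEMeasurable.iSup hq
    have hSmeas : AEMeasurable S (volume.restrict (Ioc (0:ℝ) t)) := by
      apply hS'.congr
      rw [Filter.EventuallyEq, ae_restrict_iff' measurableSet_Ioc]
      exact ae_of_all _ fun τ hτ => (hSrat τ (hsubIoc hτ)).symm
    constructor
    · exact hSmeas.aestronglyMeasurable
    · apply HasFiniteIntegral.mono' (hasFiniteIntegral_const M)
      · rw [ae_restrict_iff' measurableSet_Ioc]
        apply ae_of_all
        intro τ hτ
        rw [Real.norm_eq_abs, abs_of_nonneg (hSnonneg τ (hsubIoc hτ))]
        exact hSleM τ (hsubIoc hτ)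
  -- nonnegativity facts
  have hP0nonneg : 0 ≤ momentumSupport f 0 := by
    apply Real.sSup_nonneg
    rintro r ⟨x, v, rfl, -⟩
    exact abs_nonneg v
  have hIntNonneg : 0 ≤ ∫ τ in (0:ℝ)..t, S τ :=
    intervalIntegral.integral_nonneg ht0 (fun u hu => hSnonneg u (hsub0T hu))
  -- bound on set at time 0
  have hbdd0 : BddAbove {r : ℝ | ∃ x v : ℝ, r = |v| ∧ f 0 x v ≠ 0} := by
    have hK := hsupp 0 h0T
    obtain ⟨r, hr⟩ := hK.isBounded.subset_closedBall 0
    refine ⟨r, ?_⟩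
    rintro s ⟨x, v, rfl, hfv⟩
    have hmem : ((x, v) : ℝ × ℝ) ∈ tsupport (fun p : ℝ × ℝ => f 0 p.1 p.2) :=
      subset_tsupport _ hfv
    have := hr hmem
    rw [Metric.mem_closedBall, dist_zero_right] at this
    exact (norm_snd_le ((x, v) : ℝ × ℝ)).trans this
  -- main estimate
  apply Real.sSup_le _ (by linarith)
  rintro r ⟨x, v, rfl, hfxv⟩
  -- set up the characteristic ODE
  set F : ℝ → ℝ × ℝ → ℝ × ℝ := fun s p => (vhat p.2, E s p.1) with hFdef
  set K : NNReal := ⟨max 1 L', le_trans zero_le_one (le_max_left 1 L')⟩ with hKdef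
  set C : ℝ := max 1 M with hCdef
  have hC1 : (1:ℝ) ≤ C := le_max_left 1 M
  set R : ℝ := C * T + 1 with hRdef
  have hPL : IsPicardLindelof F (tmin := 0) (tmax := t) ⟨t, ht0, le_refl t⟩ (x, v)
      ⟨R, by positivity⟩ 0 ⟨C, by positivity⟩ K := by
    constructor
    · intro s hs
      apply LipschitzWith.lipschitzOnWith
      apply LipschitzWith.of_dist_le_mul
      intro p q
      rw [Prod.dist_eq, Prod.dist_eq]
      have hv : dist (vhat p.2) (vhat q.2) ≤ dist p.2 q.2 := by
        simpa using lipschitzWith_vhat.dist_le_mul p.2 q.2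
      have hE : dist (E s p.1) (E s q.1) ≤ L' * dist p.1 q.1 := by
        rw [Real.dist_eq, Real.dist_eq]
        exact hL' s (hsub0T hs) p.1 q.1
      have hKc : (K : ℝ) = max 1 L' := rfl
      rw [hKc]
      have h1 : dist (vhat p.2) (vhat q.2) ≤ max 1 L' * max (dist p.1 q.1) (dist p.2 q.2) := by
        calc dist (vhat p.2) (vhat q.2) ≤ dist p.2 q.2 := hv
          _ ≤ max (dist p.1 q.1) (dist p.2 q.2) := le_max_right _ _
          _ = 1 * max (dist p.1 q.1) (dist p.2 q.2) := (one_mul _).symm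
          _ ≤ max 1 L' * max (dist p.1 q.1) (dist p.2 q.2) :=
            mul_le_mul_of_nonneg_right (le_max_left _ _)
              (le_max_iff.2 (Or.inl dist_nonneg))
      have h2 : dist (E s p.1) (E s q.1) ≤ max 1 L' * max (dist p.1 q.1) (dist p.2 q.2) := by
        calc dist (E s p.1) (E s q.1) ≤ L' * dist p.1 q.1 := hE
          _ ≤ max 1 L' * max (dist p.1 q.1) (dist p.2 q.2) :=
            mul_le_mul (le_max_right _ _) (le_max_left _ _) dist_nonneg
              (le_trans hL'0 (le_max_right 1 L'))
      exact max_le h1 h2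
    · intro p hp
      apply ContinuousOn.prodMk continuousOn_const
      have h1 : Continuous (fun s : ℝ => ((s, p.1) : ℝ × ℝ)) :=
        continuous_id.prodMk continuous_const
      exact (hEc.comp h1.continuousOn (fun s hs => ⟨hsub0T hs, mem_univ _⟩))
    · intro s hs p hp
      rw [Prod.norm_def]
      apply max_le
      · rw [Real.norm_eq_abs]
        exact (abs_vhat_le p.2).trans hC1
      · rw [Real.norm_eq_abs]
        exact (hM s (hsub0T hs) p.1).trans (le_max_right 1 M)
    · show C * max (t - t) (t - 0) ≤ R - 0
      rw [sub_zero R]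
      have h1 : max (t - t) (t - 0) = t := by
        rw [sub_self, sub_zero]
        exact max_eq_right ht0
      rw [h1]
      calc C * t ≤ C * T := mul_le_mul_of_nonneg_left htT (by positivity)
        _ ≤ C * T + 1 := le_add_of_nonneg_right zero_le_one
  obtain ⟨γ, hγt', hγd⟩ := hPL.exists_eq_forall_mem_Icc_hasDerivWithinAt₀
  have hγt : γ t = (x, v) := hγt'
  set X : ℝ → ℝ := fun s => (γ s).1 with hXdef
  set V : ℝ → ℝ := fun s => (γ s).2 with hVdef
  have hXt : X t = x := by rw [hXdef]; simp [hγt]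
  have hVt : V t = v := by rw [hVdef]; simp [hγt]
  have hXd : ∀ s ∈ Icc (0:ℝ) t, HasDerivWithinAt X (vhat (V s)) (Icc (0:ℝ) t) s := by
    intro s hs
    have := (ContinuousLinearMap.fst ℝ ℝ ℝ).hasFDerivAt.comp_hasDerivWithinAt s (hγd s hs)
    exact this
  have hVd : ∀ s ∈ Icc (0:ℝ) t, HasDerivWithinAt V (E s (X s)) (Icc (0:ℝ) t) s := by
    intro s hs
    have := (ContinuousLinearMap.snd ℝ ℝ ℝ).hasFDerivAt.comp_hasDerivWithinAt s (hγd s hs)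
    exact this
  have hXcont : ContinuousOn X (Icc (0:ℝ) t) := fun s hs => (hXd s hs).continuousWithinAt
  have hVcont : ContinuousOn V (Icc (0:ℝ) t) := fun s hs => (hVd s hs).continuousWithinAt
  -- f is constant along the characteristic
  set g : ℝ → ℝ := fun s => f s (X s) (V s) with hgdef
  have hgd : ∀ s ∈ Icc (0:ℝ) t, HasDerivWithinAt g 0 (Icc (0:ℝ) t) s := by
    intro s hs
    have hc : HasDerivWithinAt (fun u : ℝ => ((u, X u, V u) : ℝ × ℝ × ℝ))
        ((1, vhat (V s), E s (X s)) : ℝ × ℝ × ℝ) (Icc (0:ℝ) t) s :=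
      (hasDerivWithinAt_id s _).prodMk ((hXd s hs).prodMk (hVd s hs))
    have hdF : HasFDerivAt (fun p : ℝ × ℝ × ℝ => f p.1 p.2.1 p.2.2)
        (fderiv ℝ (fun p : ℝ × ℝ × ℝ => f p.1 p.2.1 p.2.2) (s, X s, V s)) (s, X s, V s) :=
      ((hf.differentiable one_ne_zero) _).hasFDerivAt
    have hcomp := hdF.comp_hasDerivWithinAt s hc
    have heval : fderiv ℝ (fun p : ℝ × ℝ × ℝ => f p.1 p.2.1 p.2.2) (s, X s, V s)
        ((1, vhat (V s), E s (X s)) : ℝ × ℝ × ℝ) = 0 := by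
      rw [fderiv_triple_apply f hf s (X s) (V s) 1 (vhat (V s)) (E s (X s))]
      have := hpde s (hsub0T hs) (X s) (V s)
      linarith
    rw [heval] at hcomp
    exact hcomp
  have hgconst : g t = g 0 := by
    have hgcont : ContinuousOn g (Icc (0:ℝ) t) := fun s hs => (hgd s hs).continuousWithinAt
    exact constant_of_has_deriv_right_zero hgcont
      (fun s hs => (hgd s (Ico_subset_Icc_self hs)).mono_of_mem_nhdsWithin
        (Icc_mem_nhdsGE_of_mem hs)) t (right_mem_Icc.2 ht0)
  have hf0 : f 0 (X 0) (V 0) ≠ 0 := by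
    intro h
    apply hfxv
    have h1 : f t x v = g t := by
      show f t x v = f t (X t) (V t)
      rw [hXt, hVt]
    rw [h1, hgconst]
    exact h
  have hV0 : |V 0| ≤ momentumSupport f 0 := le_csSup hbdd0 ⟨X 0, V 0, rfl, hf0⟩
  -- FTC for V
  have hEXcont : ContinuousOn (fun s => E s (X s)) (Icc (0:ℝ) t) := by
    have h1 : ContinuousOn (fun s : ℝ => ((s, X s) : ℝ × ℝ)) (Icc (0:ℝ) t) :=
      continuousOn_id.prodMk hXcont
    exact hEc.comp h1 (fun s hs => ⟨hsub0T hs, mem_univ _⟩)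
  have hEXint : IntervalIntegrable (fun s => E s (X s)) volume 0 t := by
    apply ContinuousOn.intervalIntegrable
    rwa [uIcc_of_le ht0]
  have hftc : ∫ s in (0:ℝ)..t, E s (X s) = V t - V 0 := by
    apply intervalIntegral.integral_eq_sub_of_hasDeriv_right_of_le ht0 hVcont _ hEXint
    intro s hs
    exact (hVd s (Ioo_subset_Icc_self hs)).mono_of_mem_nhdsWithin
      (Icc_mem_nhdsGT_of_mem ⟨hs.1.le, hs.2⟩)
  have habsint : IntervalIntegrable (fun s => |E s (X s)|) volume 0 t := by
    apply ContinuousOn.intervalIntegrable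
    rw [uIcc_of_le ht0]
    exact hEXcont.abs
  have hVdiff : |V t - V 0| ≤ ∫ τ in (0:ℝ)..t, S τ := by
    rw [← hftc]
    calc |∫ s in (0:ℝ)..t, E s (X s)| ≤ ∫ s in (0:ℝ)..t, |E s (X s)| :=
          intervalIntegral.abs_integral_le_integral_abs ht0
      _ ≤ ∫ τ in (0:ℝ)..t, S τ := by
          apply intervalIntegral.integral_mono_on ht0 habsint hSint
          intro s hs
          exact le_ciSup (hSbdd s (hsub0T hs)) (X s)
  calc |v| = |V t| := by rw [hVt]
    _ ≤ |V 0| + |V t - V 0| := by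
        have := abs_sub_abs_le_abs_sub (V t) (V 0)
        linarith [abs_sub_abs_le_abs_sub (V t) (V 0)]
    _ ≤ momentumSupport f 0 + ∫ τ in (0:ℝ)..t, S τ := add_le_add hV0 hVdiff
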